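/- arXiv:2604.08481 — 3 statements merged into one kernel-verified Lean document; each statement's English description precedes it below -/
import Mathlib

section
/- Let C be a ℤ-graded real vector space with a curved dg structure (•, m₀, m₁) and let b ∈ C₋₁ be a bounding chain, i.e. m₀ + m₁(b) + b•b = 0; define m₁ᵇ(α) := m₁(α) + b•α − (−1)^{|α|} α•b. Suppose given elements Ψ₀ ∈ C₁ and Ψ⁰₀ ∈ C₀, a degree +2 linear map Ψ₁ : C → C, and a degree +1 linear map Ψ⁰₁ : C → C satisfying: m₁(Ψ₀) − Ψ₁(m₀) = Ψ⁰₀; m₁(Ψ₁(α)) − Ψ₁(m₁(α)) + Ψ₀•α − (−1)^{|α|} α•Ψ₀ = Ψ⁰₁(α) for all homogeneous α; and Ψ₁(α₁•α₂) = α₁•Ψ₁(α₂) + Ψ₁(α₁)•α₂ for all α₁, α₂. Then m₁ᵇ(Ψ₀ + Ψ₁(b)) = Ψ⁰₀ + Ψ⁰₁(b). -/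
/-- Let `C` carry a curved dg structure `(•, m₀, m₁)`, let `b ∈ C₋₁` be a bounding chain
(`m₀ + m₁(b) + b•b = 0`), and let `m₁ᵇ(α) := m₁(α) + b•α − (−1)^{|α|} α•b` be the twisted
operator.  Given `Ψ₀ ∈ C₁`, `Ψ⁰₀ ∈ C₀`, a degree `+2` linear map `Ψ₁`, and a degree `+1`
linear map `Ψ⁰₁` satisfying the stated relations, one has
`m₁ᵇ(Ψ₀ + Ψ₁(b)) = Ψ⁰₀ + Ψ⁰₁(b)`  (note `Ψ₀ + Ψ₁(b)` is homogeneous of degree `1`). -/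
theorem boundingChain_primitive_identity
    (V : Type) [AddCommGroup V] [Module ℝ V]
    (𝒞 : ℤ → Submodule ℝ V) (hInternal : DirectSum.IsInternal 𝒞)
    (mul : V →ₗ[ℝ] V →ₗ[ℝ] V)
    (hmul_deg : ∀ (i j : ℤ), ∀ x ∈ 𝒞 i, ∀ y ∈ 𝒞 j, mul x y ∈ 𝒞 (i + j))
    (hassoc : ∀ x y z : V, mul (mul x y) z = mul x (mul y z))
    (m₀ : V) (hm₀ : m₀ ∈ 𝒞 (-2))
    (m₁ : V →ₗ[ℝ] V)
    (hm₁_deg : ∀ (i : ℤ), ∀ x ∈ 𝒞 i, m₁ x ∈ 𝒞 (i - 1))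
    (hcurv₀ : m₁ m₀ = 0)
    (hcurv₁ : ∀ α : V, m₁ (m₁ α) = mul m₀ α - mul α m₀)
    (hLeibniz : ∀ (i j : ℤ), ∀ α ∈ 𝒞 i, ∀ β ∈ 𝒞 j,
      m₁ (mul α β) = mul (m₁ α) β + ((-1 : ℝ) ^ i) • mul α (m₁ β))
    (b : V) (hb : b ∈ 𝒞 (-1))
    (hbound : m₀ + m₁ b + mul b b = 0)
    (Ψ₀ : V) (hΨ₀ : Ψ₀ ∈ 𝒞 1)
    (Ψ₀' : V) (hΨ₀' : Ψ₀' ∈ 𝒞 0)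
    (Ψ₁ : V →ₗ[ℝ] V)
    (hΨ₁_deg : ∀ (i : ℤ), ∀ α ∈ 𝒞 i, Ψ₁ α ∈ 𝒞 (i + 2))
    (Ψ₁' : V →ₗ[ℝ] V)
    (hΨ₁'_deg : ∀ (i : ℤ), ∀ α ∈ 𝒞 i, Ψ₁' α ∈ 𝒞 (i + 1))
    (hrel₀ : m₁ Ψ₀ - Ψ₁ m₀ = Ψ₀')
    (hrel₁ : ∀ (i : ℤ), ∀ α ∈ 𝒞 i,
      m₁ (Ψ₁ α) - Ψ₁ (m₁ α) + mul Ψ₀ α - ((-1 : ℝ) ^ i) • mul α Ψ₀ = Ψ₁' α)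
    (hder : ∀ α₁ α₂ : V, Ψ₁ (mul α₁ α₂) = mul α₁ (Ψ₁ α₂) + mul (Ψ₁ α₁) α₂) :
    m₁ (Ψ₀ + Ψ₁ b) + mul b (Ψ₀ + Ψ₁ b)
      - ((-1 : ℝ) ^ (1 : ℤ)) • mul (Ψ₀ + Ψ₁ b) b = Ψ₀' + Ψ₁' b := by
  have h1 := hrel₁ (-1) b hb
  have h2 : Ψ₁ m₀ + Ψ₁ (m₁ b) + Ψ₁ (mul b b) = 0 := by
    have := congrArg Ψ₁ hbound
    simpa [map_add] using this
  rw [hder] at h2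
  simp only [map_add, LinearMap.add_apply, zpow_one, zpow_neg, zpow_one, inv_neg, inv_one, neg_smul, one_smul,
    sub_neg_eq_add] at h1 ⊢
  rw [← hrel₀, ← h1]
  rw [← sub_eq_zero]
  rw [show m₁ Ψ₀ + m₁ (Ψ₁ b) + (mul b Ψ₀ + mul b (Ψ₁ b)) + (mul Ψ₀ b + mul (Ψ₁ b) b)
      - (m₁ Ψ₀ - Ψ₁ m₀ + (m₁ (Ψ₁ b) - Ψ₁ (m₁ b) + mul Ψ₀ b + mul b Ψ₀))
      = Ψ₁ m₀ + Ψ₁ (m₁ b) + (mul b (Ψ₁ b) + mul (Ψ₁ b) b) from by abel, h2]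
end

section
/- Let A be an abelian group, E : A → ℝ a group homomorphism, G ⊆ A a monoid of curve classes, and N ⊆ A a module of perturbed classes over G. For each a ∈ A let (C(a)_*, ∂) be a chain complex of real vector spaces (∂ of degree −1, ∂∘∂ = 0), and for each β ∈ G⁺ and each a ∈ A let m_{1,β} : C(a)_* → C(a+β)_{*−1} be a linear map of degree −1; set m_{1,0} := ∂. Assume: (i) for every β ∈ G and every a ∈ A, the (finite) sum Σ_{β₁,β₂ ∈ G, β₁+β₂=β} m_{1,β₁}∘m_{1,β₂} = 0 as a map C(a)_* → C(a+β)_{*−2}; (ii) H₁(C(a), ∂) = 0 for every a ∈ A, i.e. every x ∈ C(a)₁ with ∂x = 0 lies in ∂(C(a)₂); (iii) there are elements N(η) ∈ C(η)₁ and N⁰(η) ∈ C(η)₀ for each η ∈ N, with N⁰(η) = 0 whenever η ∉ G, such that for every η ∈ N the (finite) sum ∂(N(η)) + Σ_{β ∈ G⁺, η−β ∈ N} m_{1,β}(N(η−β)) equals N⁰(η). Then N⁰(0) is a boundary: N⁰(0) ∈ ∂(C(0)₁). -/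
/-!
Call a family `W = (W η)_{η ∈ N}` with `W η ∈ C(η)₁` a solution if `m₁(W) = N⁰`. For
`y ∈ C(a)₂` the family `m₁(y) = (m₁,_{b-a} y)_b` is annihilated by `m₁` since `m₁ ∘ m₁ = 0`,
so `W - m₁(y)` is again a solution, differing from `W` only at `a` (by `∂y`) and at classes of
larger energy. Only finitely many classes of `N` have negative energy. At a lowest one `a` where
`W` does not vanish, the equation reads `∂(W a) = N⁰(a) = 0` (`a ∉ G` as `E a < 0`), so
`W a = ∂y` by `H₁ = 0`, and subtracting `m₁(y)` kills `W a` without disturbing lower classes.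
Once `W` vanishes on all negative classes, the equation at `0` reads `∂(W 0) = N⁰(0)`.
-/

/-- A submonoid `G` of an abelian group `A` with energy homomorphism `E : A →+ ℝ` is a
*monoid of curve classes* if energies of its elements are nonnegative and vanish only at
`0`, the image `E(G)` has no accumulation point in `ℝ`, and each energy level contains
only finitely many classes. -/
structure IsCurveClassMonoid {A : Type} [AddCommGroup A] (E : A →+ ℝ) (G : Set A) : Prop where
  zero_mem : (0 : A) ∈ G
  add_mem : ∀ ⦃β₁ β₂ : A⦄, β₁ ∈ G → β₂ ∈ G → β₁ + β₂ ∈ G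
  nonneg : ∀ β ∈ G, 0 ≤ E β
  energy_eq_zero : ∀ β ∈ G, E β = 0 → β = 0
  discrete : ∀ x : ℝ, ¬ AccPt x (Filter.principal (E '' G))
  finite_fibers : ∀ c : ℝ, {β ∈ G | E β = c}.Finite

/-- A subset `N` of an abelian group `A` is a *module of perturbed classes* over a monoid
of curve classes `G` if `0 ∈ N`, `N + G ⊆ N`, the energy `E` is bounded below on `N`, the
image `E(N)` has no accumulation point in `ℝ`, and each energy level contains only
finitely many classes. -/
structure IsPerturbedClassModule {A : Type} [AddCommGroup A] (E : A →+ ℝ)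
    (G N : Set A) : Prop where
  zero_mem : (0 : A) ∈ N
  add_mem : ∀ ⦃η β : A⦄, η ∈ N → β ∈ G → η + β ∈ N
  bddBelow : ∃ c : ℝ, ∀ η ∈ N, c ≤ E η
  discrete : ∀ x : ℝ, ¬ AccPt x (Filter.principal (E '' N))
  finite_fibers : ∀ c : ℝ, {η ∈ N | E η = c}.Finite

open Set Filter

lemma finite_inter_Icc_of_forall_not_accPt {s : Set ℝ} (hs : ∀ x : ℝ, ¬ AccPt x (𝓟 s))
    (a b : ℝ) : (s ∩ Icc a b).Finite := by
  by_contra h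
  obtain ⟨x, -, hx⟩ :=
    Set.Infinite.exists_accPt_of_subset_isCompact h isCompact_Icc inter_subset_right
  exact hs x (hx.mono (principal_mono.2 inter_subset_left))

lemma finite_setOf_mem_and_mem_Icc {A : Type*} {E : A → ℝ} {S : Set A}
    (hacc : ∀ x : ℝ, ¬ AccPt x (𝓟 (E '' S))) (hfib : ∀ c : ℝ, {η ∈ S | E η = c}.Finite)
    (a b : ℝ) : {η ∈ S | E η ∈ Icc a b}.Finite := by
  refine ((finite_inter_Icc_of_forall_not_accPt hacc a b).biUnion fun c _ => hfib c).subset ?_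
  intro η hη
  exact mem_biUnion ⟨mem_image_of_mem E hη.1, hη.2⟩ ⟨hη.1, rfl⟩

section Energy

variable {A : Type} [AddCommGroup A] {E : A →+ ℝ} {G N : Set A}

lemma IsCurveClassMonoid.energy_pos (hG : IsCurveClassMonoid E G) {β : A} (hβ : β ∈ G)
    (hβ0 : β ≠ 0) : 0 < E β :=
  (hG.nonneg β hβ).lt_of_ne fun h => hβ0 (hG.energy_eq_zero β hβ h.symm)

lemma IsCurveClassMonoid.finite_energy_le (hG : IsCurveClassMonoid E G) (B : ℝ) :
    {β ∈ G | E β ≤ B}.Finite :=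
  (finite_setOf_mem_and_mem_Icc hG.discrete hG.finite_fibers 0 B).subset
    fun β hβ => ⟨hβ.1, hG.nonneg β hβ.1, hβ.2⟩

lemma IsPerturbedClassModule.finite_energy_le (hN : IsPerturbedClassModule E G N) (B : ℝ) :
    {η ∈ N | E η ≤ B}.Finite := by
  obtain ⟨c, hc⟩ := hN.bddBelow
  exact (finite_setOf_mem_and_mem_Icc hN.discrete hN.finite_fibers c B).subset
    fun η hη => ⟨hη.1, hc η hη.1, hη.2⟩

lemma IsPerturbedClassModule.finite_setOf_mem_sub_mem (hG : IsCurveClassMonoid E G)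
    (hN : IsPerturbedClassModule E G N) (η : A) : {β | β ∈ G ∧ η - β ∈ N}.Finite := by
  obtain ⟨c, hc⟩ := hN.bddBelow
  refine (hG.finite_energy_le (E η - c)).subset fun β ⟨hβ, hηβ⟩ => ⟨hβ, ?_⟩
  have := hc _ hηβ
  rw [map_sub] at this
  linarith

end Energy

section DeformedDifferential

variable {A : Type} {V : Type*} [AddCommGroup A] [AddCommGroup V] [Module ℝ V]
  (G N : Set A) (m₁ : A → V →ₗ[ℝ] V)

/-- The component at `η` of `m₁ = ∑_β m₁,β` applied to a family `W` of chains indexed by `N`;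
the `β = 0` term is `m₁ 0 = ∂`. -/
noncomputable def deformedDiff (W : A → V) (η : A) : V :=
  ∑ᶠ β ∈ {b | b ∈ G ∧ η - b ∈ N}, m₁ β (W (η - β))

open Classical in
noncomputable def boundaryFamily (a : A) (y : V) (b : A) : V :=
  if b - a ∈ G then m₁ (b - a) y else 0

structure IsDeformedSolution (𝒞 : A → ℤ → Submodule ℝ V) (N0 W : A → V) : Prop where
  mem : ∀ η ∈ N, W η ∈ 𝒞 η 1
  deformedDiff_eq : ∀ η ∈ N, deformedDiff G N m₁ W η = N0 η

variable {G N m₁}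

lemma deformedDiff_sub {η : A} (hfin : {b | b ∈ G ∧ η - b ∈ N}.Finite) (W W' : A → V) :
    deformedDiff G N m₁ (W - W') η = deformedDiff G N m₁ W η - deformedDiff G N m₁ W' η := by
  simp only [deformedDiff, Pi.sub_apply, map_sub]
  exact finsum_mem_sub_distrib _ _ hfin

lemma m₁_zero_add_finsum_eq_deformedDiff (hG0 : (0 : A) ∈ G) {η : A} (hη : η ∈ N)
    (hfin : {b | b ∈ G ∧ η - b ∈ N}.Finite) (W : A → V) :
    m₁ 0 (W η) + ∑ᶠ β ∈ {b | b ∈ G ∧ b ≠ 0 ∧ η - b ∈ N}, m₁ β (W (η - β))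
      = deformedDiff G N m₁ W η := by
  have hsplit : {b | b ∈ G ∧ η - b ∈ N} = insert 0 {b | b ∈ G ∧ b ≠ 0 ∧ η - b ∈ N} := by
    ext β
    by_cases hβ : β = 0 <;> simp [hβ, hG0, hη]
  rw [deformedDiff, hsplit, finsum_mem_insert _ (fun h => h.2.1 rfl)
    (hfin.subset fun β hβ => ⟨hβ.1, hβ.2.2⟩), sub_zero]

lemma deformedDiff_boundaryFamily (hG_add : ∀ ⦃β₁ β₂ : A⦄, β₁ ∈ G → β₂ ∈ G → β₁ + β₂ ∈ G)
    (hN_add : ∀ ⦃η β : A⦄, η ∈ N → β ∈ G → η + β ∈ N) {a : A} (ha : a ∈ N) {y : V}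
    (hsq : ∀ δ ∈ G,
      (∑ᶠ p ∈ {q : A × A | q.1 ∈ G ∧ q.2 ∈ G ∧ q.1 + q.2 = δ}, m₁ p.1 (m₁ p.2 y)) = 0)
    (η : A) : deformedDiff G N m₁ (boundaryFamily G m₁ a y) η = 0 := by
  set δ := η - a
  have hδ : ∀ β, η - β - a = δ - β := fun β => sub_right_comm η β a
  have hsum : deformedDiff G N m₁ (boundaryFamily G m₁ a y) η
      = ∑ᶠ β ∈ {b | b ∈ G ∧ δ - b ∈ G}, m₁ β (m₁ (δ - β) y) := by
    rw [deformedDiff, finsum_mem_inter_support_eq' _ _ {b | b ∈ G ∧ δ - b ∈ G}]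
    · exact finsum_mem_congr rfl fun β hβ => by rw [boundaryFamily, hδ, if_pos hβ.2]
    · intro β hβ
      have hβa : δ - β ∈ G := by
        by_contra h
        apply hβ
        show m₁ β (boundaryFamily G m₁ a y (η - β)) = 0
        rw [boundaryFamily, hδ, if_neg h, map_zero]
      have hηβ : η - β = a + (δ - β) := by simp only [δ]; abel
      exact ⟨fun h => ⟨h.1, hβa⟩, fun h => ⟨h.1, hηβ ▸ hN_add ha hβa⟩⟩
  rw [hsum]
  by_cases hδG : δ ∈ G
  · rw [← hsq δ hδG]
    refine finsum_mem_eq_of_bijOn (fun β => (β, δ - β)) ⟨?_, ?_, ?_⟩ fun _ _ => rfl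
    · exact fun β hβ => ⟨hβ.1, hβ.2, add_sub_cancel β δ⟩
    · exact fun β _ β' _ h => congrArg Prod.fst h
    · rintro ⟨β₁, β₂⟩ ⟨hβ₁, hβ₂, hadd⟩
      have hβ₁₂ : δ - β₁ = β₂ := by rw [← hadd, add_sub_cancel_left]
      exact ⟨β₁, ⟨hβ₁, hβ₁₂ ▸ hβ₂⟩, by simp [hβ₁₂]⟩
  · refine finsum_mem_eq_zero_of_forall_eq_zero fun β hβ => absurd ?_ hδG
    simpa using hG_add hβ.1 hβ.2

lemma boundaryFamily_self (hG0 : (0 : A) ∈ G) (a : A) (y : V) :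
    boundaryFamily G m₁ a y a = m₁ 0 y := by
  rw [boundaryFamily, sub_self, if_pos hG0]

lemma boundaryFamily_eq_zero_of_energy_le {E : A →+ ℝ} (hG : IsCurveClassMonoid E G)
    {a b : A} (hba : b ≠ a) (hE : E b ≤ E a) (y : V) : boundaryFamily G m₁ a y b = 0 := by
  rw [boundaryFamily, if_neg]
  intro h
  have := hG.energy_pos h (sub_ne_zero.2 hba)
  rw [map_sub] at this
  linarith

lemma boundaryFamily_mem {𝒞 : A → ℤ → Submodule ℝ V}
    (hdeg : ∀ β ∈ G, ∀ (a : A) (i : ℤ), ∀ x ∈ 𝒞 a i, m₁ β x ∈ 𝒞 (a + β) (i - 1))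
    {a : A} {i : ℤ} {y : V} (hy : y ∈ 𝒞 a (i + 1)) (b : A) :
    boundaryFamily G m₁ a y b ∈ 𝒞 b i := by
  rw [boundaryFamily]
  split_ifs with h
  · simpa using hdeg _ h a _ y hy
  · exact zero_mem _

end DeformedDifferential

namespace IsDeformedSolution

variable {A : Type} {V : Type*} [AddCommGroup A] [AddCommGroup V] [Module ℝ V]
  {E : A →+ ℝ} {G N : Set A} {m₁ : A → V →ₗ[ℝ] V} {𝒞 : A → ℤ → Submodule ℝ V} {N0 W : A → V}

lemma m₁_zero_eq_of_eq_zero_below (hG : IsCurveClassMonoid E G)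
    (hN : IsPerturbedClassModule E G N) (hW : IsDeformedSolution G N m₁ 𝒞 N0 W) {η : A}
    (hη : η ∈ N) (hbelow : ∀ κ ∈ N, E κ < E η → W κ = 0) : m₁ 0 (W η) = N0 η := by
  rw [← hW.deformedDiff_eq η hη, ← m₁_zero_add_finsum_eq_deformedDiff hG.zero_mem hη
    (hN.finite_setOf_mem_sub_mem hG η), left_eq_add]
  refine finsum_mem_eq_zero_of_forall_eq_zero fun β ⟨hβ, hβ0, hηβ⟩ => ?_
  have hE : E (η - β) < E η := by
    rw [map_sub]
    linarith [hG.energy_pos hβ hβ0]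
  rw [hbelow _ hηβ hE, map_zero]

lemma sub_boundaryFamily (hG : IsCurveClassMonoid E G) (hN : IsPerturbedClassModule E G N)
    (hdeg : ∀ β ∈ G, ∀ (a : A) (i : ℤ), ∀ x ∈ 𝒞 a i, m₁ β x ∈ 𝒞 (a + β) (i - 1))
    (hW : IsDeformedSolution G N m₁ 𝒞 N0 W) {a : A} (ha : a ∈ N) {y : V} (hy : y ∈ 𝒞 a 2)
    (hsq : ∀ δ ∈ G,
      (∑ᶠ p ∈ {q : A × A | q.1 ∈ G ∧ q.2 ∈ G ∧ q.1 + q.2 = δ}, m₁ p.1 (m₁ p.2 y)) = 0) :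
    IsDeformedSolution G N m₁ 𝒞 N0 (W - boundaryFamily G m₁ a y) where
  mem η hη := sub_mem (hW.mem η hη) (boundaryFamily_mem hdeg (i := 1) hy η)
  deformedDiff_eq η hη := by
    rw [deformedDiff_sub (hN.finite_setOf_mem_sub_mem hG η),
      deformedDiff_boundaryFamily hG.add_mem hN.add_mem ha hsq, sub_zero, hW.deformedDiff_eq η hη]

lemma exists_eq_zero_at (hG : IsCurveClassMonoid E G) (hN : IsPerturbedClassModule E G N)
    (hdeg : ∀ β ∈ G, ∀ (a : A) (i : ℤ), ∀ x ∈ 𝒞 a i, m₁ β x ∈ 𝒞 (a + β) (i - 1))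
    (hsq : ∀ β ∈ G, ∀ (a : A) (i : ℤ), ∀ x ∈ 𝒞 a i,
      (∑ᶠ p ∈ {q : A × A | q.1 ∈ G ∧ q.2 ∈ G ∧ q.1 + q.2 = β}, m₁ p.1 (m₁ p.2 x)) = 0)
    (hH1 : ∀ (a : A), ∀ x ∈ 𝒞 a 1, m₁ 0 x = 0 → ∃ y ∈ 𝒞 a 2, m₁ 0 y = x)
    (hN0 : ∀ η : A, η ∉ G → N0 η = 0) (hW : IsDeformedSolution G N m₁ 𝒞 N0 W)
    {a : A} (ha : a ∈ N) (ha0 : E a < 0) (hbelow : ∀ κ ∈ N, E κ < E a → W κ = 0) :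
    ∃ W', IsDeformedSolution G N m₁ 𝒞 N0 W' ∧ W' a = 0 ∧
      ∀ κ, κ ≠ a → E κ ≤ E a → W' κ = W κ := by
  have hcycle : m₁ 0 (W a) = 0 := by
    rw [hW.m₁_zero_eq_of_eq_zero_below hG hN ha hbelow,
      hN0 a fun haG => (hG.nonneg a haG).not_gt ha0]
  obtain ⟨y, hy, hdy⟩ := hH1 a (W a) (hW.mem a ha) hcycle
  refine ⟨W - boundaryFamily G m₁ a y, hW.sub_boundaryFamily hG hN hdeg ha hy (hsq · · a 2 y hy),
    ?_, fun κ hκa hκ => ?_⟩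
  · rw [Pi.sub_apply, boundaryFamily_self hG.zero_mem, hdy, sub_self]
  · rw [Pi.sub_apply, boundaryFamily_eq_zero_of_energy_le hG hκa hκ, sub_zero]

lemma exists_eq_zero_of_energy_neg (hG : IsCurveClassMonoid E G)
    (hN : IsPerturbedClassModule E G N)
    (hdeg : ∀ β ∈ G, ∀ (a : A) (i : ℤ), ∀ x ∈ 𝒞 a i, m₁ β x ∈ 𝒞 (a + β) (i - 1))
    (hsq : ∀ β ∈ G, ∀ (a : A) (i : ℤ), ∀ x ∈ 𝒞 a i,
      (∑ᶠ p ∈ {q : A × A | q.1 ∈ G ∧ q.2 ∈ G ∧ q.1 + q.2 = β}, m₁ p.1 (m₁ p.2 x)) = 0)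
    (hH1 : ∀ (a : A), ∀ x ∈ 𝒞 a 1, m₁ 0 x = 0 → ∃ y ∈ 𝒞 a 2, m₁ 0 y = x)
    (hN0 : ∀ η : A, η ∉ G → N0 η = 0) (hW : IsDeformedSolution G N m₁ 𝒞 N0 W) :
    ∃ W', IsDeformedSolution G N m₁ 𝒞 N0 W' ∧ ∀ κ ∈ N, E κ < 0 → W' κ = 0 := by
  classical
  set K := {κ ∈ N | E κ < 0}
  have hK : K.Finite := (hN.finite_energy_le 0).subset fun κ hκ => ⟨hκ.1, hκ.2.le⟩
  suffices h : ∀ F : Finset A, ↑F ⊆ K → (∀ κ ∈ K, ∀ κ' ∈ F, E κ < E κ' → κ ∈ F) →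
      ∃ W', IsDeformedSolution G N m₁ 𝒞 N0 W' ∧ ∀ κ ∈ F, W' κ = 0 by
    obtain ⟨W', hW', hzero⟩ := h hK.toFinset (by simp) fun κ hκ _ _ _ => by simpa using hκ
    exact ⟨W', hW', fun κ hκ hκ0 => hzero κ (hK.mem_toFinset.2 ⟨hκ, hκ0⟩)⟩
  intro F
  induction F using Finset.induction_on_max_value E with
  | empty => exact fun _ _ => ⟨W, hW, by simp⟩
  | insert a F haF hmax ih =>
    intro hFK hclosed
    have haK : a ∈ K := hFK (Finset.mem_insert_self a F)
    have hlower : ∀ κ ∈ K, E κ < E a → κ ∈ F := fun κ hκ hlt =>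
      (Finset.mem_insert.1 (hclosed κ hκ a (Finset.mem_insert_self a F) hlt)).resolve_left
        (by rintro rfl; exact hlt.false)
    obtain ⟨W₁, hW₁, hW₁F⟩ := ih (fun κ hκ => hFK (Finset.mem_insert_of_mem hκ))
      fun κ hκ κ' hκ' hlt => hlower κ hκ (hlt.trans_le (hmax κ' hκ'))
    obtain ⟨W₂, hW₂, hW₂a, hW₂eq⟩ := hW₁.exists_eq_zero_at hG hN hdeg hsq hH1 hN0 haK.1 haK.2
      fun κ hκ hlt => hW₁F κ (hlower κ ⟨hκ, hlt.trans haK.2⟩ hlt)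
    refine ⟨W₂, hW₂, fun κ hκ => ?_⟩
    rcases Finset.mem_insert.1 hκ with rfl | hκF
    · exact hW₂a
    · rw [hW₂eq κ (by rintro rfl; exact haF hκF) (hmax κ hκF), hW₁F κ hκF]

end IsDeformedSolution

theorem energy_zero_term_is_boundary_general
    {A : Type} [AddCommGroup A] (E : A →+ ℝ) (G N : Set A)
    (hG : IsCurveClassMonoid E G) (hN : IsPerturbedClassModule E G N)
    (V : Type) [AddCommGroup V] [Module ℝ V]
    (𝒞 : A → ℤ → Submodule ℝ V)
    (d : V →ₗ[ℝ] V)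
    (hd_deg : ∀ (a : A) (i : ℤ), ∀ x ∈ 𝒞 a i, d x ∈ 𝒞 a (i - 1))
    (m₁ : A → (V →ₗ[ℝ] V))
    (hm₁_zero : m₁ 0 = d)
    (hm₁_deg : ∀ β, β ∈ G → β ≠ 0 → ∀ (a : A) (i : ℤ), ∀ x ∈ 𝒞 a i,
      m₁ β x ∈ 𝒞 (a + β) (i - 1))
    -- (i) the total deformed differential squares to zero
    (hsq : ∀ β ∈ G, ∀ (a : A) (i : ℤ), ∀ x ∈ 𝒞 a i,
      (∑ᶠ p ∈ {q : A × A | q.1 ∈ G ∧ q.2 ∈ G ∧ q.1 + q.2 = β}, m₁ p.1 (m₁ p.2 x)) = 0)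
    -- (ii) vanishing of first homology of each `(C(a), ∂)`
    (hH1 : ∀ (a : A), ∀ x ∈ 𝒞 a 1, d x = 0 → ∃ y ∈ 𝒞 a 2, d y = x)
    -- (iii) the elements `N(η)` and `N⁰(η)` and the equation `m₁(N) = N⁰`
    (NN : A → V) (N0 : A → V)
    (hNN_mem : ∀ η ∈ N, NN η ∈ 𝒞 η 1)
    (hN0_vanish : ∀ η : A, η ∉ G → N0 η = 0)
    (heq : ∀ η ∈ N,
      d (NN η) + (∑ᶠ β ∈ {b : A | b ∈ G ∧ b ≠ 0 ∧ η - b ∈ N}, m₁ β (NN (η - β)))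
        = N0 η) :
    ∃ y ∈ 𝒞 0 1, d y = N0 0 := by
  subst hm₁_zero
  have hdeg : ∀ β ∈ G, ∀ (a : A) (i : ℤ), ∀ x ∈ 𝒞 a i, m₁ β x ∈ 𝒞 (a + β) (i - 1) := by
    intro β hβ a i x hx
    by_cases hβ0 : β = 0
    · subst hβ0
      simpa using hd_deg a i x hx
    · exact hm₁_deg β hβ hβ0 a i x hx
  have hNN : IsDeformedSolution G N m₁ 𝒞 N0 NN := ⟨hNN_mem, fun η hη => by
    rw [← m₁_zero_add_finsum_eq_deformedDiff hG.zero_mem hη (hN.finite_setOf_mem_sub_mem hG η)]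
    exact heq η hη⟩
  obtain ⟨W, hW, hW0⟩ := hNN.exists_eq_zero_of_energy_neg hG hN hdeg hsq hH1 hN0_vanish
  refine ⟨W 0, hW.mem 0 hN.zero_mem, hW.m₁_zero_eq_of_eq_zero_below hG hN hN.zero_mem ?_⟩
  simpa only [map_zero] using hW0

/-- Abstract form of the vanishing argument for Maslov-zero Lagrangians: given a
`G`-gapped family of chain complexes `(C(a), ∂)` with deformed differentials `m₁,β`
squaring to zero, vanishing first homology, and elements `N(η) ∈ C(η)₁`, `N⁰(η) ∈ C(η)₀`
satisfying `m₁(N) = N⁰`, the energy-zero term `N⁰(0)` is a boundary. -/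
theorem energy_zero_term_is_boundary
    {A : Type} [AddCommGroup A] [DecidableEq A] (E : A →+ ℝ) (G N : Set A)
    (hG : IsCurveClassMonoid E G) (hN : IsPerturbedClassModule E G N)
    (V : Type) [AddCommGroup V] [Module ℝ V]
    (𝒞 : A → ℤ → Submodule ℝ V)
    (hInternal : DirectSum.IsInternal fun p : A × ℤ => 𝒞 p.1 p.2)
    (d : V →ₗ[ℝ] V)
    (hd_deg : ∀ (a : A) (i : ℤ), ∀ x ∈ 𝒞 a i, d x ∈ 𝒞 a (i - 1))
    (hdd : ∀ x : V, d (d x) = 0)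
    (m₁ : A → (V →ₗ[ℝ] V))
    (hm₁_zero : m₁ 0 = d)
    (hm₁_deg : ∀ β, β ∈ G → β ≠ 0 → ∀ (a : A) (i : ℤ), ∀ x ∈ 𝒞 a i,
      m₁ β x ∈ 𝒞 (a + β) (i - 1))
    -- (i) the total deformed differential squares to zero
    (hsq : ∀ β ∈ G, ∀ (a : A) (i : ℤ), ∀ x ∈ 𝒞 a i,
      (∑ᶠ p ∈ {q : A × A | q.1 ∈ G ∧ q.2 ∈ G ∧ q.1 + q.2 = β}, m₁ p.1 (m₁ p.2 x)) = 0)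
    -- (ii) vanishing of first homology of each `(C(a), ∂)`
    (hH1 : ∀ (a : A), ∀ x ∈ 𝒞 a 1, d x = 0 → ∃ y ∈ 𝒞 a 2, d y = x)
    -- (iii) the elements `N(η)` and `N⁰(η)` and the equation `m₁(N) = N⁰`
    (NN : A → V) (N0 : A → V)
    (hNN_mem : ∀ η ∈ N, NN η ∈ 𝒞 η 1)
    (hN0_mem : ∀ η ∈ N, N0 η ∈ 𝒞 η 0)
    (hN0_vanish : ∀ η : A, η ∉ G → N0 η = 0)
    (heq : ∀ η ∈ N,
      d (NN η) + (∑ᶠ β ∈ {b : A | b ∈ G ∧ b ≠ 0 ∧ η - b ∈ N}, m₁ β (NN (η - β)))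
        = N0 η) :
    ∃ y ∈ 𝒞 0 1, d y = N0 0 :=
  energy_zero_term_is_boundary_general E G N hG hN V 𝒞 d hd_deg m₁ hm₁_zero hm₁_deg hsq hH1 NN N0
    hNN_mem hN0_vanish heq
end

section
/- Let A be an abelian group, E : A → ℝ a group homomorphism, and G ⊆ A a monoid of curve classes. For each a ∈ A let C(a)_* be a ℤ-graded real vector space, and suppose given: degree 0 bilinear products • : C(a)_i × C(b)_j → C(a+b)_{i+j} which are associative; degree −1 linear maps ∂ : C(a)_* → C(a)_{*−1} (set m_{1,0} := ∂) and m_{1,β} : C(a)_* → C(a+β)_{*−1} for each β ∈ G⁺; and elements m_{0,β} ∈ C(β)₋₂ for β ∈ G⁺ (set m_{0,0} := 0), satisfying for each β ∈ G (all sums finite): (a) Σ_{β₁,β₂ ∈ G, β₁+β₂=β} m_{1,β₁}(m_{0,β₂}) = 0; (b) Σ_{β₁,β₂ ∈ G, β₁+β₂=β} m_{1,β₁}(m_{1,β₂}(α)) = m_{0,β}•α − α•m_{0,β} for every a ∈ A and every α ∈ C(a); (c) m_{1,β}(α₁•α₂) = m_{1,β}(α₁)•α₂ + (−1)^{|α₁|}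 α₁•m_{1,β}(α₂) for homogeneous α₁, α₂. Assume moreover that H₋₂(C(β), ∂) = 0 for every β ∈ G⁺, i.e. every x ∈ C(β)₋₂ with ∂x = 0 lies in ∂(C(β)₋₁). Then there exists a family b = (b(β))_{β ∈ G⁺} with b(β) ∈ C(β)₋₁ such that for every β ∈ G⁺: m_{0,β} + Σ_{β₁ ∈ G, β₂ ∈ G⁺, β₁+β₂=β} m_{1,β₁}(b(β₂)) + Σ_{β₁,β₂ ∈ G⁺, β₁+β₂=β} b(β₁)•b(β₂) = 0. -/
/-!
The chain `b` is built by recursion on the energy. Write `F_b(β)` for the left-hand side of the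
Maurer–Cartan equation. From (a), (b), (c) and associativity one gets the Bianchi identity
`Σ m₁,β₁(F_b(β₂)) = Σ (F_b(β₁)•b(β₂) − b(β₁)•F_b(β₂))`. If the equation holds in all energies
below `E β`, every term except `∂ F_b(β)` vanishes, so `F_b(β)` (computed with `b(β) = 0`) is a
`∂`-cycle in `C(β)₋₂`, hence a boundary `∂y`, and `b(β) := -y` solves the equation at `β`. Since
`E(G)` is discrete with finite fibres, "lower energy" is a well-founded relation on `G`.
-/

open Finset Function

theorem WellFounded.exists_forall_of_forall_exists_update {α β : Type*} [DecidableEq α]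
    [Nonempty β]
    {r : α → α → Prop} (hr : WellFounded r) (htrans : ∀ x y z, r x y → r y z → r x z)
    (P : (α → β) → α → Prop)
    (hloc : ∀ f g x, (∀ y, r y x → f y = g y) → f x = g x → P f x → P g x)
    (hstep : ∀ f x, (∀ y, r y x → P f y) → ∃ v, P (update f x v) x) :
    ∃ f : α → β, ∀ x, P f x := by
  classical
  let below (x : α) (rec : ∀ y, r y x → β) : α → β := fun y =>
    if h : r y x then rec y h else Classical.arbitrary β
  let g : α → β := hr.fix fun x rec =>
    if h : ∃ v, P (update (below x rec) x v) x then h.choose else Classical.arbitrary β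
  refine ⟨g, fun x => hr.induction x fun x ih => ?_⟩
  set f := below x fun y _ => g y
  have hf : ∀ y, r y x → f y = g y := fun y hy => dif_pos hy
  obtain ⟨v, hv⟩ : ∃ v, P (update f x v) x :=
    hstep f x fun y hy => hloc g f y (fun z hz => (hf z (htrans _ _ _ hz hy)).symm)
      (hf y hy).symm (ih y hy)
  have hgx : g x = (⟨v, hv⟩ : ∃ v, P (update f x v) x).choose :=
    (hr.fix_eq _ x).trans (dif_pos _)
  refine hloc _ g x (fun y hy => ?_) (update_self _ _ _) (hgx ▸ Exists.choose_spec _)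
  by_cases hyx : y = x
  · subst hyx; exact update_self _ _ _
  · rw [update_of_ne hyx, hf y hy]

namespace IsCurveClassMonoid

variable {A : Type} [AddCommGroup A] {E : A →+ ℝ} {G : Set A}

theorem energy_pos_s14 (hG : IsCurveClassMonoid E G) {β : A} (hβ : β ∈ G) (hβ0 : β ≠ 0) :
    0 < E β :=
  (hG.nonneg β hβ).lt_of_ne fun h => hβ0 (hG.energy_eq_zero β hβ h.symm)

theorem energy_lt_of_add_eq (hG : IsCurveClassMonoid E G) {x y β : A} (hy : y ∈ G)
    (hy0 : y ≠ 0) (h : x + y = β) : E x < E β := by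
  have := hG.energy_pos_s14 hy hy0
  rw [← h, map_add]
  linarith

/-- The energy values below `c` lie in the compact `[0, c]` and cannot accumulate, so there are
finitely many of them, each carried by finitely many classes. -/
theorem finite_energy_le_s14 (hG : IsCurveClassMonoid E G) (c : ℝ) :
    {β ∈ G | E β ≤ c}.Finite := by
  set S := {β ∈ G | E β ≤ c}
  have hS : (E '' S).Finite := by
    by_contra h
    obtain ⟨x, -, hx⟩ := Set.Infinite.exists_accPt_of_subset_isCompact h isCompact_Icc
      (by rintro _ ⟨β, ⟨hβ, hβc⟩, rfl⟩; exact ⟨hG.nonneg β hβ, hβc⟩)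
    exact hG.discrete x (hx.mono (Filter.principal_mono.2 (Set.image_mono fun β hβ => hβ.1)))
  refine (hS.biUnion fun c _ => hG.finite_fibers c).subset fun β hβ => ?_
  exact Set.mem_biUnion (Set.mem_image_of_mem E hβ) ⟨hβ.1, rfl⟩

theorem wellFounded_energy_lt (hG : IsCurveClassMonoid E G) :
    WellFounded fun γ β : A => γ ∈ G ∧ E γ < E β := by
  refine Subrelation.wf (fun {γ β} h => ?_)
    (InvImage.wf (fun β => {γ ∈ G | E γ < E β}.ncard) wellFounded_lt)
  refine Set.ncard_lt_ncard ⟨fun δ hδ => ⟨hδ.1, hδ.2.trans h.2⟩, fun hsub => ?_⟩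
    ((hG.finite_energy_le_s14 (E β)).subset fun δ hδ => ⟨hδ.1, hδ.2.le⟩)
  exact (hsub h).2.false

theorem finite_antidiagonal (hG : IsCurveClassMonoid E G) (β : A) :
    {p : A × A | p.1 ∈ G ∧ p.2 ∈ G ∧ p.1 + p.2 = β}.Finite := by
  refine ((hG.finite_energy_le_s14 (E β)).prod (hG.finite_energy_le_s14 (E β))).subset ?_
  rintro ⟨x, y⟩ ⟨hx, hy, rfl⟩
  have := hG.nonneg x hx
  have := hG.nonneg y hy
  simp only [Set.mem_prod, Set.mem_ofPred_eq, map_add]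
  exact ⟨⟨hx, by linarith⟩, hy, by linarith⟩

noncomputable def antidiagonal (hG : IsCurveClassMonoid E G) (β : A) : Finset (A × A) :=
  (hG.finite_antidiagonal β).toFinset

variable (hG : IsCurveClassMonoid E G) {β : A}

@[simp]
theorem mem_antidiagonal {p : A × A} :
    p ∈ hG.antidiagonal β ↔ p.1 ∈ G ∧ p.2 ∈ G ∧ p.1 + p.2 = β :=
  Set.Finite.mem_toFinset _

theorem coe_antidiagonal :
    (hG.antidiagonal β : Set (A × A)) = {p : A × A | p.1 ∈ G ∧ p.2 ∈ G ∧ p.1 + p.2 = β} :=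
  Set.Finite.coe_toFinset _

theorem antidiagonal_zero : hG.antidiagonal 0 = {(0, 0)} := by
  ext ⟨x, y⟩
  simp only [mem_antidiagonal, Finset.mem_singleton, Prod.mk.injEq]
  constructor
  · rintro ⟨hx, hy, hxy⟩
    have hE : E x + E y = 0 := by rw [← map_add, hxy, map_zero]
    have := hG.nonneg x hx
    have := hG.nonneg y hy
    exact ⟨hG.energy_eq_zero x hx (by linarith), hG.energy_eq_zero y hy (by linarith)⟩
  · rintro ⟨rfl, rfl⟩
    exact ⟨hG.zero_mem, hG.zero_mem, add_zero 0⟩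

variable {M : Type*} [AddCommMonoid M]

theorem sum_antidiagonal_swap (f : A → A → M) :
    ∑ p ∈ hG.antidiagonal β, f p.2 p.1 = ∑ p ∈ hG.antidiagonal β, f p.1 p.2 :=
  Finset.sum_nbij' Prod.swap Prod.swap (by simp [add_comm]; tauto) (by simp [add_comm]; tauto)
    (by simp) (by simp) (by simp)

theorem sum_antidiagonal_antidiagonal (f : A → A → A → M) :
    ∑ p ∈ hG.antidiagonal β, ∑ q ∈ hG.antidiagonal p.1, f q.1 q.2 p.2 =
      ∑ p ∈ hG.antidiagonal β, ∑ q ∈ hG.antidiagonal p.2, f p.1 q.1 q.2 := by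
  simp only [Finset.sum_sigma']
  apply Finset.sum_nbij' (fun ⟨⟨_, z⟩, ⟨x, y⟩⟩ => ⟨(x, y + z), (y, z)⟩)
    (fun ⟨⟨x, _⟩, ⟨y, z⟩⟩ => ⟨(x + y, z), (x, y)⟩) <;>
    aesop (add simp add_assoc) (add safe hG.add_mem)

theorem sum_antidiagonal_antidiagonal_comm (f : A → A → A → M) :
    ∑ p ∈ hG.antidiagonal β, ∑ q ∈ hG.antidiagonal p.2, f q.1 p.1 q.2 =
      ∑ p ∈ hG.antidiagonal β, ∑ q ∈ hG.antidiagonal p.2, f p.1 q.1 q.2 := by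
  refine ((hG.sum_antidiagonal_antidiagonal fun x y z => f y x z).symm.trans ?_).trans
    (hG.sum_antidiagonal_antidiagonal f)
  exact Finset.sum_congr rfl fun p _ => hG.sum_antidiagonal_swap fun x y => f x y p.2

end IsCurveClassMonoid

section MaurerCartan

variable {A : Type} [AddCommGroup A] {E : A →+ ℝ} {G : Set A} (hG : IsCurveClassMonoid E G)
  {R V : Type*} [CommSemiring R] [AddCommGroup V] [Module R V]
  (mul : V →ₗ[R] V →ₗ[R] V) (m₁ : A → V →ₗ[R] V) (m₀ : A → V)

/-- The left-hand side of the Maurer–Cartan equation at `β`, summed over all of `G`: for `b 0 = 0`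
the terms with a zero index of `b` drop out, and the term `m₁ 0 (b β)` is `∂ b(β)`. -/
noncomputable def maurerCartan (b : A → V) (β : A) : V :=
  m₀ β + ∑ p ∈ hG.antidiagonal β, m₁ p.1 (b p.2) + ∑ p ∈ hG.antidiagonal β, mul (b p.1) (b p.2)

/-- The Bianchi identity `m₁(F) = F • b − b • F` for `F = maurerCartan b`. -/
theorem sum_antidiagonal_maurerCartan {b : A → V} {β : A}
    (hassoc : ∀ x y z : V, mul (mul x y) z = mul x (mul y z))
    (ha : ∑ p ∈ hG.antidiagonal β, m₁ p.1 (m₀ p.2) = 0)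
    (hb : ∀ γ ∈ G, ∀ δ, ∑ p ∈ hG.antidiagonal γ, m₁ p.1 (m₁ p.2 (b δ)) =
      mul (m₀ γ) (b δ) - mul (b δ) (m₀ γ))
    (hc : ∀ γ ∈ G, ∀ δ δ', m₁ γ (mul (b δ) (b δ')) =
      mul (m₁ γ (b δ)) (b δ') - mul (b δ) (m₁ γ (b δ'))) :
    ∑ p ∈ hG.antidiagonal β, m₁ p.1 (maurerCartan hG mul m₁ m₀ b p.2) =
      ∑ p ∈ hG.antidiagonal β, (mul (maurerCartan hG mul m₁ m₀ b p.1) (b p.2) -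
        mul (b p.1) (maurerCartan hG mul m₁ m₀ b p.2)) := by
  simp only [maurerCartan, map_add, map_sum, LinearMap.add_apply, LinearMap.sum_apply,
    sum_add_distrib, sum_sub_distrib, ha, hassoc]
  have hm₁m₁ : ∑ p ∈ hG.antidiagonal β, ∑ q ∈ hG.antidiagonal p.2, m₁ p.1 (m₁ q.1 (b q.2)) =
      ∑ p ∈ hG.antidiagonal β, (mul (m₀ p.1) (b p.2) - mul (b p.2) (m₀ p.1)) :=
    (hG.sum_antidiagonal_antidiagonal fun x y z => m₁ x (m₁ y (b z))).symm.trans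
      (sum_congr rfl fun p hp => hb _ ((hG.mem_antidiagonal).1 hp).1 _)
  have hm₁mul : ∑ p ∈ hG.antidiagonal β, ∑ q ∈ hG.antidiagonal p.2, m₁ p.1 (mul (b q.1) (b q.2)) =
      ∑ p ∈ hG.antidiagonal β, ∑ q ∈ hG.antidiagonal p.2, mul (m₁ p.1 (b q.1)) (b q.2) -
        ∑ p ∈ hG.antidiagonal β, ∑ q ∈ hG.antidiagonal p.2, mul (b q.1) (m₁ p.1 (b q.2)) := by
    rw [← sum_sub_distrib]
    refine sum_congr rfl fun p hp => ?_
    rw [← sum_sub_distrib]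
    exact sum_congr rfl fun q _ => hc _ ((hG.mem_antidiagonal).1 hp).1 _ _
  have hmul_m₁ := hG.sum_antidiagonal_antidiagonal (β := β) fun x y z => mul (m₁ x (b y)) (b z)
  have hmul_mul :=
    hG.sum_antidiagonal_antidiagonal (β := β) fun x y z => mul (b x) (mul (b y) (b z))
  have hmul_m₀ := hG.sum_antidiagonal_swap (β := β) fun x y => mul (b y) (m₀ x)
  have hmul_m₁' :=
    hG.sum_antidiagonal_antidiagonal_comm (β := β) fun x y z => mul (b y) (m₁ x (b z))
  beta_reduce at hmul_m₁ hmul_mul hmul_m₀ hmul_m₁'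
  rw [hm₁m₁, hm₁mul, hmul_m₁, hmul_mul, hmul_m₀, hmul_m₁', sum_sub_distrib]
  abel

theorem finsum_mem_antidiagonal {M : Type*} [AddCommMonoid M] (f : A × A → M) (β : A) :
    ∑ᶠ p ∈ {q : A × A | q.1 ∈ G ∧ q.2 ∈ G ∧ q.1 + q.2 = β}, f p =
      ∑ p ∈ hG.antidiagonal β, f p := by
  rw [← hG.coe_antidiagonal, finsum_mem_coe_finset]

theorem maurerCartan_eq_finsum {b : A → V} (hb0 : b 0 = 0) (β : A) :
    m₀ β + ∑ᶠ p ∈ {q : A × A | q.1 ∈ G ∧ q.2 ∈ G ∧ q.2 ≠ 0 ∧ q.1 + q.2 = β}, m₁ p.1 (b p.2) +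
      ∑ᶠ p ∈ {q : A × A | q.1 ∈ G ∧ q.1 ≠ 0 ∧ q.2 ∈ G ∧ q.2 ≠ 0 ∧ q.1 + q.2 = β},
        mul (b p.1) (b p.2) = maurerCartan hG mul m₁ m₀ b β := by
  classical
  have h₁ : {q : A × A | q.1 ∈ G ∧ q.2 ∈ G ∧ q.2 ≠ 0 ∧ q.1 + q.2 = β} =
      ↑((hG.antidiagonal β).filter fun q => q.2 ≠ 0) := by
    ext; simp; tauto
  have h₂ : {q : A × A | q.1 ∈ G ∧ q.1 ≠ 0 ∧ q.2 ∈ G ∧ q.2 ≠ 0 ∧ q.1 + q.2 = β} =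
      ↑((hG.antidiagonal β).filter fun q => q.1 ≠ 0 ∧ q.2 ≠ 0) := by
    ext; simp; tauto
  rw [h₁, h₂, finsum_mem_coe_finset, finsum_mem_coe_finset, maurerCartan,
    sum_filter_of_ne, sum_filter_of_ne]
  · rintro p - h
    exact ⟨fun h1 => h (by simp [h1, hb0]), fun h2 => h (by simp [h2, hb0])⟩
  · rintro p - h h2
    exact h (by simp [h2, hb0])

theorem maurerCartan_congr {b b' : A → V} {β : A} (h : ∀ γ ∈ G, E γ < E β → b γ = b' γ)
    (hβ : b β = b' β) : maurerCartan hG mul m₁ m₀ b β = maurerCartan hG mul m₁ m₀ b' β := by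
  have hfst : ∀ x y, x ∈ G → y ∈ G → x + y = β → b x = b' x := by
    intro x y hx hy hxy
    rcases eq_or_ne y 0 with rfl | hy0
    · rwa [← add_zero x, hxy]
    · exact h x hx (hG.energy_lt_of_add_eq hy hy0 hxy)
  have hcomp : ∀ p ∈ hG.antidiagonal β, b p.1 = b' p.1 ∧ b p.2 = b' p.2 := by
    rintro ⟨x, y⟩ hp
    obtain ⟨hx, hy, hxy⟩ := (hG.mem_antidiagonal).1 hp
    exact ⟨hfst x y hx hy hxy, hfst y x hy hx ((add_comm y x).trans hxy)⟩
  simp only [maurerCartan]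
  congr 1
  · congr 1
    exact sum_congr rfl fun p hp => by rw [(hcomp p hp).2]
  · exact sum_congr rfl fun p hp => by rw [(hcomp p hp).1, (hcomp p hp).2]

theorem maurerCartan_update [DecidableEq A] {b : A → V} {β : A} (hβ : β ∈ G) (hβ0 : β ≠ 0)
    (hb0 : b 0 = 0) (hbβ : b β = 0) (v : V) :
    maurerCartan hG mul m₁ m₀ (update b β v) β = maurerCartan hG mul m₁ m₀ b β + m₁ 0 v := by
  have hmem : ((0 : A), β) ∈ hG.antidiagonal β := by simp [hG.zero_mem, hβ]
  have hm₁ : ∀ p ∈ (hG.antidiagonal β).erase (0, β),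
      m₁ p.1 (update b β v p.2) = m₁ p.1 (b p.2) := by
    rintro ⟨x, y⟩ hp
    simp only [mem_erase, ne_eq, Prod.mk.injEq, hG.mem_antidiagonal] at hp
    refine congrArg _ (update_of_ne (fun hy => hp.1 ⟨?_, hy⟩) _ _)
    rw [hy] at hp
    exact add_eq_right.1 hp.2.2.2
  have hmul : ∀ p ∈ hG.antidiagonal β,
      mul (update b β v p.1) (update b β v p.2) = mul (b p.1) (b p.2) := by
    rintro ⟨x, y⟩ hp
    obtain ⟨-, -, hxy⟩ := (hG.mem_antidiagonal).1 hp
    by_cases hx : x = β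
    · obtain rfl : y = 0 := by rw [hx] at hxy; exact add_eq_left.1 hxy
      simp [hb0, hβ0.symm]
    by_cases hy : y = β
    · obtain rfl : x = 0 := by rw [hy] at hxy; exact add_eq_right.1 hxy
      simp [hb0, hβ0.symm]
    simp [update_of_ne hx, update_of_ne hy]
  have hsum : ∑ p ∈ hG.antidiagonal β, m₁ p.1 (update b β v p.2) =
      m₁ 0 v + ∑ p ∈ hG.antidiagonal β, m₁ p.1 (b p.2) := by
    rw [← add_sum_erase _ _ hmem, ← add_sum_erase _ _ hmem, sum_congr rfl hm₁]
    simp [hbβ]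
  rw [maurerCartan, maurerCartan, hsum, sum_congr rfl hmul]
  abel

theorem m₁_zero_maurerCartan_eq_zero {b : A → V} {β : A} (hβ : β ∈ G)
    (hassoc : ∀ x y z : V, mul (mul x y) z = mul x (mul y z))
    (ha : ∑ p ∈ hG.antidiagonal β, m₁ p.1 (m₀ p.2) = 0)
    (hb : ∀ γ ∈ G, ∀ δ, ∑ p ∈ hG.antidiagonal γ, m₁ p.1 (m₁ p.2 (b δ)) =
      mul (m₀ γ) (b δ) - mul (b δ) (m₀ γ))
    (hc : ∀ γ ∈ G, ∀ δ δ', m₁ γ (mul (b δ) (b δ')) =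
      mul (m₁ γ (b δ)) (b δ') - mul (b δ) (m₁ γ (b δ')))
    (hm₀ : m₀ 0 = 0) (hb0 : b 0 = 0)
    (hlow : ∀ γ ∈ G, γ ≠ 0 → E γ < E β → maurerCartan hG mul m₁ m₀ b γ = 0) :
    m₁ 0 (maurerCartan hG mul m₁ m₀ b β) = 0 := by
  have hbianchi := sum_antidiagonal_maurerCartan hG mul m₁ m₀ hassoc ha hb hc
  set F := maurerCartan hG mul m₁ m₀ b
  have hF : ∀ γ ∈ G, E γ < E β → F γ = 0 := by
    intro γ hγ hE
    rcases eq_or_ne γ 0 with rfl | hγ0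
    · simp [F, maurerCartan, hG.antidiagonal_zero, hm₀, hb0]
    · exact hlow γ hγ hγ0 hE
  rw [sum_eq_single_of_mem (0, β) (by simp [hG.zero_mem, hβ]), sum_eq_zero] at hbianchi
  · exact hbianchi
  · rintro ⟨x, y⟩ hp
    obtain ⟨hx, hy, hxy⟩ := (hG.mem_antidiagonal).1 hp
    have h₁ : mul (F x) (b y) = 0 := by
      rcases eq_or_ne y 0 with rfl | hy0
      · simp [hb0]
      · simp [hF x hx (hG.energy_lt_of_add_eq hy hy0 hxy)]
    have h₂ : mul (b x) (F y) = 0 := by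
      rcases eq_or_ne x 0 with rfl | hx0
      · simp [hb0]
      · simp [hF y hy (hG.energy_lt_of_add_eq hx hx0 ((add_comm y x).trans hxy))]
    rw [h₁, h₂, sub_zero]
  · rintro ⟨x, y⟩ hp hne
    obtain ⟨hx, hy, hxy⟩ := (hG.mem_antidiagonal).1 hp
    have hx0 : x ≠ 0 := by
      rintro rfl
      exact hne (by rw [← zero_add y, hxy])
    simp [hF y hy (hG.energy_lt_of_add_eq hx hx0 ((add_comm y x).trans hxy))]

theorem maurerCartan_mem (𝒞 : A → ℤ → Submodule R V) {b : A → V} {β : A}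
    (hmul_deg : ∀ (a a' : A) (i j : ℤ), ∀ x ∈ 𝒞 a i, ∀ y ∈ 𝒞 a' j, mul x y ∈ 𝒞 (a + a') (i + j))
    (hm₁_deg : ∀ γ ∈ G, ∀ (a : A) (i : ℤ), ∀ x ∈ 𝒞 a i, m₁ γ x ∈ 𝒞 (a + γ) (i - 1))
    (hm₀ : m₀ β ∈ 𝒞 β (-2)) (hdeg : ∀ γ, b γ ∈ 𝒞 γ (-1)) :
    maurerCartan hG mul m₁ m₀ b β ∈ 𝒞 β (-2) := by
  refine add_mem (add_mem hm₀ (sum_mem fun p hp => ?_)) (sum_mem fun p hp => ?_) <;>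
    obtain ⟨h₁, h₂, h₁₂⟩ := (hG.mem_antidiagonal).1 hp
  · simpa [add_comm p.2, h₁₂] using hm₁_deg p.1 h₁ p.2 (-1) (b p.2) (hdeg p.2)
  · simpa [h₁₂] using hmul_deg p.1 p.2 (-1) (-1) (b p.1) (hdeg p.1) (b p.2) (hdeg p.2)

end MaurerCartan

section Deformation

variable {A : Type} [AddCommGroup A] {E : A →+ ℝ} {G : Set A}
  {V : Type*} [AddCommGroup V] [Module ℝ V]

/-- A `G`-gapped curved dg associative deformation on the `A × ℤ`-graded space `V`, with
differential `m₁ 0`; the last three fields are the identities (a), (b), (c). -/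
structure IsGappedCurvedDeformation (hG : IsCurveClassMonoid E G) (𝒞 : A → ℤ → Submodule ℝ V)
    (mul : V →ₗ[ℝ] V →ₗ[ℝ] V) (m₁ : A → V →ₗ[ℝ] V) (m₀ : A → V) : Prop where
  mul_mem : ∀ (a a' : A) (i j : ℤ), ∀ x ∈ 𝒞 a i, ∀ y ∈ 𝒞 a' j, mul x y ∈ 𝒞 (a + a') (i + j)
  mul_assoc : ∀ x y z : V, mul (mul x y) z = mul x (mul y z)
  m₁_mem : ∀ γ ∈ G, ∀ (a : A) (i : ℤ), ∀ x ∈ 𝒞 a i, m₁ γ x ∈ 𝒞 (a + γ) (i - 1)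
  m₀_zero : m₀ 0 = 0
  m₀_mem : ∀ β ∈ G, β ≠ 0 → m₀ β ∈ 𝒞 β (-2)
  m₁_m₀ : ∀ β ∈ G, ∑ p ∈ hG.antidiagonal β, m₁ p.1 (m₀ p.2) = 0
  m₁_m₁ : ∀ β ∈ G, ∀ (a : A) (i : ℤ), ∀ α ∈ 𝒞 a i,
    ∑ p ∈ hG.antidiagonal β, m₁ p.1 (m₁ p.2 α) = mul (m₀ β) α - mul α (m₀ β)
  m₁_mul : ∀ β ∈ G, ∀ (a₁ a₂ : A) (i j : ℤ), ∀ α₁ ∈ 𝒞 a₁ i, ∀ α₂ ∈ 𝒞 a₂ j,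
    m₁ β (mul α₁ α₂) = mul (m₁ β α₁) α₂ + ((-1 : ℝ) ^ i) • mul α₁ (m₁ β α₂)

namespace IsGappedCurvedDeformation

variable {hG : IsCurveClassMonoid E G} {𝒞 : A → ℤ → Submodule ℝ V} {mul : V →ₗ[ℝ] V →ₗ[ℝ] V}
  {m₁ : A → V →ₗ[ℝ] V} {m₀ : A → V}

theorem m₁_mul_of_mem_neg_one (D : IsGappedCurvedDeformation hG 𝒞 mul m₁ m₀) {β a₁ a₂ : A}
    {j : ℤ} (hβ : β ∈ G) {α₁ α₂ : V} (h₁ : α₁ ∈ 𝒞 a₁ (-1)) (h₂ : α₂ ∈ 𝒞 a₂ j) :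
    m₁ β (mul α₁ α₂) = mul (m₁ β α₁) α₂ - mul α₁ (m₁ β α₂) := by
  rw [D.m₁_mul β hβ a₁ a₂ (-1) j α₁ h₁ α₂ h₂]
  simp [sub_eq_add_neg]

theorem exists_maurerCartan_update_eq_zero [DecidableEq A]
    (D : IsGappedCurvedDeformation hG 𝒞 mul m₁ m₀)
    (hH : ∀ β, β ∈ G → β ≠ 0 → ∀ x ∈ 𝒞 β (-2), m₁ 0 x = 0 → ∃ y ∈ 𝒞 β (-1), m₁ 0 y = x)
    {b : A → V} {β : A} (hβ : β ∈ G) (hβ0 : β ≠ 0) (hb0 : b 0 = 0)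
    (hlow : ∀ γ ∈ G, γ ≠ 0 → E γ < E β →
      b γ ∈ 𝒞 γ (-1) ∧ maurerCartan hG mul m₁ m₀ b γ = 0) :
    ∃ v ∈ 𝒞 β (-1), maurerCartan hG mul m₁ m₀ (update b β v) β = 0 := by
  classical
  -- Cut `b` off below energy `E β`, so that all its values have degree `-1`, as (b) and (c) need.
  set b₀ : A → V := fun γ => if γ ∈ G ∧ E γ < E β then b γ else 0
  have hb₀0 : b₀ 0 = 0 := by simp [b₀, hb0]
  have hb₀β : b₀ β = 0 := by simp [b₀]
  have hb₀mem : ∀ γ, b₀ γ ∈ 𝒞 γ (-1) := by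
    intro γ
    simp only [b₀]
    split_ifs with h
    · rcases eq_or_ne γ 0 with rfl | hγ0
      · rw [hb0]; exact zero_mem _
      · exact (hlow γ h.1 hγ0 h.2).1
    · exact zero_mem _
  have hb₀low : ∀ γ ∈ G, γ ≠ 0 → E γ < E β → maurerCartan hG mul m₁ m₀ b₀ γ = 0 :=
    fun γ hγ hγ0 hE => (maurerCartan_congr hG mul m₁ m₀
      (fun δ hδ hδE => if_pos ⟨hδ, hδE.trans hE⟩) (if_pos ⟨hγ, hE⟩)).trans (hlow γ hγ hγ0 hE).2
  have hclosed : m₁ 0 (maurerCartan hG mul m₁ m₀ b₀ β) = 0 :=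
    m₁_zero_maurerCartan_eq_zero hG mul m₁ m₀ hβ D.mul_assoc (D.m₁_m₀ β hβ)
      (fun γ hγ δ => D.m₁_m₁ γ hγ δ (-1) _ (hb₀mem δ))
      (fun γ hγ δ δ' => D.m₁_mul_of_mem_neg_one hγ (hb₀mem δ) (hb₀mem δ'))
      D.m₀_zero hb₀0 hb₀low
  obtain ⟨y, hy, hdy⟩ := hH β hβ hβ0 _
    (maurerCartan_mem hG mul m₁ m₀ 𝒞 D.mul_mem D.m₁_mem (D.m₀_mem β hβ hβ0) hb₀mem) hclosed
  refine ⟨-y, neg_mem hy, ?_⟩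
  have hupd : maurerCartan hG mul m₁ m₀ (update b β (-y)) β =
      maurerCartan hG mul m₁ m₀ (update b₀ β (-y)) β := by
    refine maurerCartan_congr hG mul m₁ m₀ (fun γ hγ hE => ?_) (by simp)
    have hγβ : γ ≠ β := fun h => hE.ne (congrArg E h)
    simp [update_of_ne hγβ, b₀, hγ, hE]
  rw [hupd, maurerCartan_update hG mul m₁ m₀ hβ hβ0 hb₀0 hb₀β, map_neg, hdy, add_neg_cancel]

theorem exists_maurerCartan_eq_zero (D : IsGappedCurvedDeformation hG 𝒞 mul m₁ m₀)
    (hH : ∀ β, β ∈ G → β ≠ 0 → ∀ x ∈ 𝒞 β (-2), m₁ 0 x = 0 → ∃ y ∈ 𝒞 β (-1), m₁ 0 y = x) :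
    ∃ b : A → V, b 0 = 0 ∧
      ∀ β ∈ G, β ≠ 0 → b β ∈ 𝒞 β (-1) ∧ maurerCartan hG mul m₁ m₀ b β = 0 := by
  classical
  refine (hG.wellFounded_energy_lt.exists_forall_of_forall_exists_update
    (fun _ _ _ h₁ h₂ => ⟨h₁.1, h₁.2.trans h₂.2⟩)
    (fun b β => (β = 0 → b β = 0) ∧
      (β ∈ G → β ≠ 0 → b β ∈ 𝒞 β (-1) ∧ maurerCartan hG mul m₁ m₀ b β = 0))
    (fun b b' β hlow hβ ⟨h0, h⟩ => ⟨fun hβ0 => hβ ▸ h0 hβ0, fun hβG hβ0 => hβ ▸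
      maurerCartan_congr hG mul m₁ m₀ (fun γ hγ hE => hlow γ ⟨hγ, hE⟩) hβ ▸ h hβG hβ0⟩)
    ?_).imp fun b hb => ⟨(hb 0).1 rfl, fun β => (hb β).2⟩
  intro b β hlow
  by_cases hβ : β ∈ G ∧ β ≠ 0
  · have hb0 : b 0 = 0 := (hlow 0 ⟨hG.zero_mem, by simpa using hG.energy_pos_s14 hβ.1 hβ.2⟩).1 rfl
    obtain ⟨v, hv, hF⟩ := D.exists_maurerCartan_update_eq_zero hH hβ.1 hβ.2 hb0
      fun γ hγ hγ0 hE => (hlow γ ⟨hγ, hE⟩).2 hγ hγ0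
    exact ⟨v, fun h => absurd h hβ.2, fun _ _ => ⟨by rwa [update_self], hF⟩⟩
  · exact ⟨0, fun _ => update_self _ _ _, fun h₁ h₂ => absurd ⟨h₁, h₂⟩ hβ⟩

end IsGappedCurvedDeformation

end Deformation

theorem exists_boundingChain_general
    {A : Type} [AddCommGroup A] (E : A →+ ℝ) (G : Set A)
    (hG : IsCurveClassMonoid E G)
    (V : Type) [AddCommGroup V] [Module ℝ V]
    (𝒞 : A → ℤ → Submodule ℝ V)
    (mul : V →ₗ[ℝ] V →ₗ[ℝ] V)
    (hmul_deg : ∀ (a b : A) (i j : ℤ), ∀ x ∈ 𝒞 a i, ∀ y ∈ 𝒞 b j,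
      mul x y ∈ 𝒞 (a + b) (i + j))
    (hassoc : ∀ x y z : V, mul (mul x y) z = mul x (mul y z))
    (d : V →ₗ[ℝ] V)
    (hd_deg : ∀ (a : A) (i : ℤ), ∀ x ∈ 𝒞 a i, d x ∈ 𝒞 a (i - 1))
    (m₁ : A → (V →ₗ[ℝ] V))
    (hm₁_zero : m₁ 0 = d)
    (hm₁_deg : ∀ β, β ∈ G → β ≠ 0 → ∀ (a : A) (i : ℤ), ∀ x ∈ 𝒞 a i,
      m₁ β x ∈ 𝒞 (a + β) (i - 1))
    (m₀ : A → V)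
    (hm₀_zero : m₀ 0 = 0)
    (hm₀_mem : ∀ β, β ∈ G → β ≠ 0 → m₀ β ∈ 𝒞 β (-2))
    -- (a) `m₁(m₀) = 0`
    (ha : ∀ β ∈ G,
      (∑ᶠ p ∈ {q : A × A | q.1 ∈ G ∧ q.2 ∈ G ∧ q.1 + q.2 = β}, m₁ p.1 (m₀ p.2)) = 0)
    -- (b) `m₁²(α) = m₀•α − α•m₀`
    (hb : ∀ β ∈ G, ∀ (a : A) (i : ℤ), ∀ α ∈ 𝒞 a i,
      (∑ᶠ p ∈ {q : A × A | q.1 ∈ G ∧ q.2 ∈ G ∧ q.1 + q.2 = β}, m₁ p.1 (m₁ p.2 α))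
        = mul (m₀ β) α - mul α (m₀ β))
    -- (c) each `m₁,β` is a graded derivation of `•`
    (hc : ∀ β ∈ G, ∀ (a₁ a₂ : A) (i j : ℤ), ∀ α₁ ∈ 𝒞 a₁ i, ∀ α₂ ∈ 𝒞 a₂ j,
      m₁ β (mul α₁ α₂) = mul (m₁ β α₁) α₂ + ((-1 : ℝ) ^ i) • mul α₁ (m₁ β α₂))
    -- vanishing of the degree `−2` homology of `(C(β), ∂)` for `β ∈ G⁺`
    (hH : ∀ β, β ∈ G → β ≠ 0 → ∀ x ∈ 𝒞 β (-2), d x = 0 → ∃ y ∈ 𝒞 β (-1), d y = x) :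
    ∃ b : A → V, (∀ β, β ∈ G → β ≠ 0 → b β ∈ 𝒞 β (-1)) ∧
      ∀ β, β ∈ G → β ≠ 0 →
        m₀ β
          + (∑ᶠ p ∈ {q : A × A | q.1 ∈ G ∧ q.2 ∈ G ∧ q.2 ≠ 0 ∧ q.1 + q.2 = β},
              m₁ p.1 (b p.2))
          + (∑ᶠ p ∈ {q : A × A |
                q.1 ∈ G ∧ q.1 ≠ 0 ∧ q.2 ∈ G ∧ q.2 ≠ 0 ∧ q.1 + q.2 = β},
              mul (b p.1) (b p.2)) = 0 := by
  subst hm₁_zero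
  have D : IsGappedCurvedDeformation hG 𝒞 mul m₁ m₀ :=
    { mul_mem := hmul_deg
      mul_assoc := hassoc
      m₁_mem := fun γ hγ a i x hx => by
        rcases eq_or_ne γ 0 with rfl | hγ0
        · simpa using hd_deg a i x hx
        · exact hm₁_deg γ hγ hγ0 a i x hx
      m₀_zero := hm₀_zero
      m₀_mem := hm₀_mem
      m₁_m₀ := fun β hβ => by rw [← finsum_mem_antidiagonal hG]; exact ha β hβ
      m₁_m₁ := fun β hβ a i α hα => by
        rw [← finsum_mem_antidiagonal hG]; exact hb β hβ a i α hα
      m₁_mul := hc }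
  obtain ⟨b, hb0, hb⟩ := D.exists_maurerCartan_eq_zero hH
  refine ⟨b, fun β hβ hβ0 => (hb β hβ hβ0).1, fun β hβ hβ0 => ?_⟩
  rw [maurerCartan_eq_finsum hG mul m₁ m₀ hb0]
  exact (hb β hβ hβ0).2

/-- Existence of a bounding chain for a `G`-gapped curved dg associative deformation whose
homology in degree `−2` vanishes on each nonzero class: there is a family
`b(β) ∈ C(β)₋₁`, `β ∈ G⁺`, satisfying the Maurer–Cartan equation
`m₀,β + Σ m₁,β₁(b(β₂)) + Σ b(β₁)•b(β₂) = 0` for every `β ∈ G⁺`. -/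
theorem exists_boundingChain
    {A : Type} [AddCommGroup A] [DecidableEq A] (E : A →+ ℝ) (G : Set A)
    (hG : IsCurveClassMonoid E G)
    (V : Type) [AddCommGroup V] [Module ℝ V]
    (𝒞 : A → ℤ → Submodule ℝ V)
    (hInternal : DirectSum.IsInternal fun p : A × ℤ => 𝒞 p.1 p.2)
    (mul : V →ₗ[ℝ] V →ₗ[ℝ] V)
    (hmul_deg : ∀ (a b : A) (i j : ℤ), ∀ x ∈ 𝒞 a i, ∀ y ∈ 𝒞 b j,
      mul x y ∈ 𝒞 (a + b) (i + j))
    (hassoc : ∀ x y z : V, mul (mul x y) z = mul x (mul y z))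
    (d : V →ₗ[ℝ] V)
    (hd_deg : ∀ (a : A) (i : ℤ), ∀ x ∈ 𝒞 a i, d x ∈ 𝒞 a (i - 1))
    (m₁ : A → (V →ₗ[ℝ] V))
    (hm₁_zero : m₁ 0 = d)
    (hm₁_deg : ∀ β, β ∈ G → β ≠ 0 → ∀ (a : A) (i : ℤ), ∀ x ∈ 𝒞 a i,
      m₁ β x ∈ 𝒞 (a + β) (i - 1))
    (m₀ : A → V)
    (hm₀_zero : m₀ 0 = 0)
    (hm₀_mem : ∀ β, β ∈ G → β ≠ 0 → m₀ β ∈ 𝒞 β (-2))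
    -- (a) `m₁(m₀) = 0`
    (ha : ∀ β ∈ G,
      (∑ᶠ p ∈ {q : A × A | q.1 ∈ G ∧ q.2 ∈ G ∧ q.1 + q.2 = β}, m₁ p.1 (m₀ p.2)) = 0)
    -- (b) `m₁²(α) = m₀•α − α•m₀`
    (hb : ∀ β ∈ G, ∀ (a : A) (i : ℤ), ∀ α ∈ 𝒞 a i,
      (∑ᶠ p ∈ {q : A × A | q.1 ∈ G ∧ q.2 ∈ G ∧ q.1 + q.2 = β}, m₁ p.1 (m₁ p.2 α))
        = mul (m₀ β) α - mul α (m₀ β))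
    -- (c) each `m₁,β` is a graded derivation of `•`
    (hc : ∀ β ∈ G, ∀ (a₁ a₂ : A) (i j : ℤ), ∀ α₁ ∈ 𝒞 a₁ i, ∀ α₂ ∈ 𝒞 a₂ j,
      m₁ β (mul α₁ α₂) = mul (m₁ β α₁) α₂ + ((-1 : ℝ) ^ i) • mul α₁ (m₁ β α₂))
    -- vanishing of the degree `−2` homology of `(C(β), ∂)` for `β ∈ G⁺`
    (hH : ∀ β, β ∈ G → β ≠ 0 → ∀ x ∈ 𝒞 β (-2), d x = 0 → ∃ y ∈ 𝒞 β (-1), d y = x) :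
    ∃ b : A → V, (∀ β, β ∈ G → β ≠ 0 → b β ∈ 𝒞 β (-1)) ∧
      ∀ β, β ∈ G → β ≠ 0 →
        m₀ β
          + (∑ᶠ p ∈ {q : A × A | q.1 ∈ G ∧ q.2 ∈ G ∧ q.2 ≠ 0 ∧ q.1 + q.2 = β},
              m₁ p.1 (b p.2))
          + (∑ᶠ p ∈ {q : A × A |
                q.1 ∈ G ∧ q.1 ≠ 0 ∧ q.2 ∈ G ∧ q.2 ≠ 0 ∧ q.1 + q.2 = β},
              mul (b p.1) (b p.2)) = 0 :=
  exists_boundingChain_general E G hG V 𝒞 mul hmul_deg hassoc d hd_deg m₁ hm₁_zero hm₁_deg m₀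
    hm₀_zero hm₀_mem ha hb hc hH
end
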